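/- arXiv:1412.8528 — 3 statements merged into one kernel-verified Lean document; each statement's English description precedes it below -/
import Mathlib

section
/- Let X be a measurable space and H a complex Hilbert space. For every POVM φ on X with values in effects on H, there exists a unique map Φ from the set of measurable functions p : X → [0,1] to the effects on H such that: (i) Φ(1_M) = φ(M) for every measurable M ⊆ X, where 1_M is the indicator function; (ii) Φ(p + q) = Φ(p) + Φ(q) whenever p + q ≤ 1 pointwise; (iii) Φ(r • p) = r • Φ(p) for every r ∈ [0,1]; (iv) whenever (p n) is a pointwise increasing sequence of measurable [0,1]-valued functions converging pointwise to p, Φ(p n) converges to Φ(p) in the weak operator topology. -/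
open Filter Topology
open scoped ComplexInnerProductSpace ComplexOrder

universe u v

noncomputable section

/-- An operator `A` on a complex Hilbert space is positive if `⟪A ψ, ψ⟫` is real and
nonnegative for every vector `ψ` (expressed via the order on `ℂ`). -/
def IsPositiveOp {H : Type*} [NormedAddCommGroup H] [InnerProductSpace ℂ H]
    (A : H →L[ℂ] H) : Prop :=
  ∀ ψ : H, (0 : ℂ) ≤ ⟪A ψ, ψ⟫

/-- An effect is an operator `A` with both `A` and `id - A` positive. -/
def IsEffect {H : Type*} [NormedAddCommGroup H] [InnerProductSpace ℂ H]
    (A : H →L[ℂ] H) : Prop :=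
  IsPositiveOp A ∧ IsPositiveOp (1 - A)

/-- A POVM on a measurable space `X` with values in the effects on `H`. -/
def IsPOVM {X : Type*} [MeasurableSpace X] {H : Type*} [NormedAddCommGroup H]
    [InnerProductSpace ℂ H] (φ : ∀ M : Set X, MeasurableSet M → (H →L[ℂ] H)) : Prop :=
  (∀ (M : Set X) (hM : MeasurableSet M), IsEffect (φ M hM)) ∧
  φ Set.univ MeasurableSet.univ = 1 ∧
  ∀ (M : ℕ → Set X) (hM : ∀ n, MeasurableSet (M n)),
    Pairwise (Function.onFun Disjoint M) →
    ∀ ψ : H, ⟪φ (⋃ n, M n) (MeasurableSet.iUnion hM) ψ, ψ⟫ = ∑' n, ⟪φ (M n) (hM n) ψ, ψ⟫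

/-- Convergence of a sequence of operators in the weak operator topology. -/
def WOTTendsto {H : Type*} [NormedAddCommGroup H] [InnerProductSpace ℂ H]
    (T : ℕ → H →L[ℂ] H) (L : H →L[ℂ] H) : Prop :=
  ∀ ψ χ : H, Tendsto (fun n => ⟪T n ψ, χ⟫) atTop (𝓝 ⟪L ψ, χ⟫)

/-! Every vector `ψ` turns `φ` into a finite measure `μ_ψ(M) = ⟪φ(M) ψ, ψ⟫` of mass `‖ψ‖²`, and
conditions (i)–(iv) force `⟪Φ(p) ψ, ψ⟫ = ∫ p dμ_ψ`: for the dyadic roundings `pₙ` of `p`,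
(i)–(iii) make `Φ(pₙ)` the finite sum `∑ₖ (k / 2ⁿ) φ(pₙ = k / 2ⁿ)`, and (iv) passes to the limit.
An operator on a complex Hilbert space is determined by its quadratic form, whence uniqueness.
For existence, these finite sums are effects whose quadratic forms converge by monotone
convergence; polarization and the Riesz representation of the limiting bounded sesquilinear form
produce `Φ(p)`, and (i)–(iv) become identities between integrals. -/

open MeasureTheory

section Operators

variable {H : Type*} [NormedAddCommGroup H] [InnerProductSpace ℂ H]

theorem ContinuousLinearMap.ext_inner_self {S T : H →L[ℂ] H}
    (h : ∀ ψ, ⟪S ψ, ψ⟫ = ⟪T ψ, ψ⟫) : S = T :=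
  ContinuousLinearMap.coe_injective ((ext_inner_map _ _).mp h)

theorem IsPositiveOp.re_inner_self_nonneg {A : H →L[ℂ] H} (hA : IsPositiveOp A) (ψ : H) :
    0 ≤ (⟪A ψ, ψ⟫).re :=
  (Complex.nonneg_iff.mp (hA ψ)).1

theorem IsPositiveOp.ofReal_re_inner_self {A : H →L[ℂ] H} (hA : IsPositiveOp A) (ψ : H) :
    (((⟪A ψ, ψ⟫).re : ℝ) : ℂ) = ⟪A ψ, ψ⟫ :=
  Complex.ext rfl (Complex.nonneg_iff.mp (hA ψ)).2

theorem IsPositiveOp.isPositive {A : H →L[ℂ] H} (hA : IsPositiveOp A) : A.IsPositive :=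
  (A.isPositive_iff_complex).mpr fun ψ => ⟨hA.ofReal_re_inner_self ψ, hA.re_inner_self_nonneg ψ⟩

theorem IsEffect.re_inner_self_le {A : H →L[ℂ] H} (hA : IsEffect A) (ψ : H) :
    (⟪A ψ, ψ⟫).re ≤ ‖ψ‖ ^ 2 := by
  have h := hA.2.re_inner_self_nonneg ψ
  rw [sub_apply, one_apply_eq_self, inner_sub_left, Complex.sub_re] at h
  have : (⟪ψ, ψ⟫).re = ‖ψ‖ ^ 2 := inner_self_eq_norm_sq (𝕜 := ℂ) ψ
  linarith

theorem isEffect_of_inner_self_eq_ofReal {A : H →L[ℂ] H} {q : H → ℝ}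
    (hA : ∀ ψ, ⟪A ψ, ψ⟫ = q ψ) (hq₀ : ∀ ψ, 0 ≤ q ψ) (hq₁ : ∀ ψ, q ψ ≤ ‖ψ‖ ^ 2) :
    IsEffect A := by
  refine ⟨fun ψ => hA ψ ▸ Complex.zero_le_real.mpr (hq₀ ψ), fun ψ => ?_⟩
  rw [sub_apply, one_apply_eq_self, inner_sub_left, hA, sub_nonneg, ← inner_self_ofReal_re,
    inner_self_eq_norm_sq]
  exact Complex.real_le_real.mpr (hq₁ ψ)

theorem IsEffect.norm_le_one [CompleteSpace H] {A : H →L[ℂ] H} (hA : IsEffect A) : ‖A‖ ≤ 1 :=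
  (CStarAlgebra.norm_le_one_iff_of_nonneg A ((A.nonneg_iff_isPositive).mpr hA.1.isPositive)).mpr
    ((ContinuousLinearMap.le_def A 1).mpr hA.2.isPositive)

theorem tendsto_inner_of_tendsto_inner_self {T : ℕ → H →L[ℂ] H} {q : H → ℂ}
    (h : ∀ ψ, Tendsto (fun n => ⟪T n ψ, ψ⟫) atTop (𝓝 (q ψ))) (ψ χ : H) :
    Tendsto (fun n => ⟪T n ψ, χ⟫) atTop
      (𝓝 ((q (χ + ψ) - q (χ - ψ) + Complex.I * q (χ + Complex.I • ψ) -
        Complex.I * q (χ - Complex.I • ψ)) / 4)) := by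
  have hpol := fun n => inner_map_polarization (T n : H →ₗ[ℂ] H) χ ψ
  simp only [ContinuousLinearMap.coe_coe] at hpol
  simp only [hpol]
  exact ((((h _).sub (h _)).add ((h _).const_mul _)).sub ((h _).const_mul _)).div_const 4

theorem wotTendsto_of_tendsto_inner_self {T : ℕ → H →L[ℂ] H} {L : H →L[ℂ] H}
    (h : ∀ ψ, Tendsto (fun n => ⟪T n ψ, ψ⟫) atTop (𝓝 ⟪L ψ, ψ⟫)) : WOTTendsto T L := by
  intro ψ χ
  have hpol := inner_map_polarization (L : H →ₗ[ℂ] H) χ ψ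
  rw [ContinuousLinearMap.coe_coe] at hpol
  rw [hpol]
  exact tendsto_inner_of_tendsto_inner_self h ψ χ

/-- The polarized limit form is bounded sesquilinear, so the Riesz representation provides the
limit operator. -/
theorem exists_wotTendsto_of_tendsto_inner_self [CompleteSpace H] {T : ℕ → H →L[ℂ] H} {C : ℝ}
    (hT : ∀ n, ‖T n‖ ≤ C) {q : H → ℂ}
    (h : ∀ ψ, Tendsto (fun n => ⟪T n ψ, ψ⟫) atTop (𝓝 (q ψ))) :
    ∃ A : H →L[ℂ] H, WOTTendsto T A := by
  set B : H → H → ℂ := fun ψ χ => (q (χ + ψ) - q (χ - ψ) + Complex.I * q (χ + Complex.I • ψ) -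
    Complex.I * q (χ - Complex.I • ψ)) / 4
  have hB : ∀ ψ χ, Tendsto (fun n => ⟪T n ψ, χ⟫) atTop (𝓝 (B ψ χ)) :=
    tendsto_inner_of_tendsto_inner_self h
  have hbound : ∀ ψ χ, ‖B ψ χ‖ ≤ C * ‖ψ‖ * ‖χ‖ := fun ψ χ =>
    le_of_tendsto' (hB ψ χ).norm fun n => calc
      ‖⟪T n ψ, χ⟫‖ ≤ ‖T n‖ * ‖ψ‖ * ‖χ‖ :=
        (norm_inner_le_norm _ _).trans (by gcongr; exact (T n).le_opNorm ψ)
      _ ≤ C * ‖ψ‖ * ‖χ‖ := by gcongr; exact hT n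
  let B' : H →L⋆[ℂ] H →L[ℂ] ℂ := LinearMap.mkContinuous₂
    (LinearMap.mk₂'ₛₗ (starRingEnd ℂ) (RingHom.id ℂ) B
      (fun ψ₁ ψ₂ χ => tendsto_nhds_unique (hB _ _) <| by
        simpa only [map_add, inner_add_left] using (hB ψ₁ χ).add (hB ψ₂ χ))
      (fun a ψ χ => tendsto_nhds_unique (hB _ _) <| by
        simpa only [map_smul, inner_smul_left, smul_eq_mul] using (hB ψ χ).const_mul _)
      (fun ψ χ₁ χ₂ => tendsto_nhds_unique (hB _ _) <| by
        simpa only [inner_add_right] using (hB ψ χ₁).add (hB ψ χ₂))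
      (fun a ψ χ => tendsto_nhds_unique (hB _ _) <| by
        simpa only [inner_smul_right, smul_eq_mul, RingHom.id_apply] using (hB ψ χ).const_mul _))
    C hbound
  exact ⟨InnerProductSpace.continuousLinearMapOfBilin B', fun ψ χ => by
    rw [InnerProductSpace.continuousLinearMapOfBilin_apply]
    exact hB ψ χ⟩

end Operators

namespace IsPOVM

variable {X : Type*} [MeasurableSpace X] {H : Type*} [NormedAddCommGroup H]
  [InnerProductSpace ℂ H] {φ : ∀ M : Set X, MeasurableSet M → (H →L[ℂ] H)}

theorem inner_empty_self (hφ : IsPOVM φ) (ψ : H) : ⟪φ ∅ .empty ψ, ψ⟫ = 0 := by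
  have h := hφ.2.2 (fun _ => ∅) (fun _ => .empty) (fun _ _ _ => Set.disjoint_empty _) ψ
  simp only [Set.iUnion_empty, tsum_const, Nat.card_eq_zero_of_infinite, zero_smul] at h
  exact h

theorem sum_range_re_inner_self_le (hφ : IsPOVM φ) {M : ℕ → Set X}
    (hM : ∀ k, MeasurableSet (M k)) (hd : Pairwise (Function.onFun Disjoint M)) (ψ : H)
    (n : ℕ) : ∑ k ∈ Finset.range n, (⟪φ (M k) (hM k) ψ, ψ⟫).re ≤ ‖ψ‖ ^ 2 := by
  classical
  set M' : ℕ → Set X := fun k => if k < n then M k else ∅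
  have hM' : ∀ k, MeasurableSet (M' k) := fun k => by
    by_cases hk : k < n <;> simp [M', hk, hM k]
  have hd' : Pairwise (Function.onFun Disjoint M') := fun i j hij => by
    by_cases hi : i < n <;> by_cases hj : j < n <;> simp [M', Function.onFun, hi, hj, hd hij]
  have hsum := hφ.2.2 M' hM' hd' ψ
  rw [tsum_eq_sum (s := Finset.range n) fun k hk => by
    simp only [M', Finset.mem_range.not.mp hk, if_false]; exact hφ.inner_empty_self ψ] at hsum
  have hfirst : ∑ k ∈ Finset.range n, ⟪φ (M' k) (hM' k) ψ, ψ⟫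
      = ∑ k ∈ Finset.range n, ⟪φ (M k) (hM k) ψ, ψ⟫ :=
    Finset.sum_congr rfl fun k hk => by simp only [M', Finset.mem_range.mp hk, if_true]
  rw [← Complex.re_sum, ← hfirst, ← hsum]
  exact (hφ.1 _ _).re_inner_self_le ψ

def measure (hφ : IsPOVM φ) (ψ : H) : Measure X :=
  Measure.ofMeasurable (fun M hM => ENNReal.ofReal (⟪φ M hM ψ, ψ⟫).re)
    (by simp [hφ.inner_empty_self ψ])
    (fun M hM hd => by
      have hre : ∀ n, (((⟪φ (M n) (hM n) ψ, ψ⟫).re : ℝ) : ℂ) = ⟪φ (M n) (hM n) ψ, ψ⟫ :=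
        fun n => (hφ.1 _ _).1.ofReal_re_inner_self ψ
      rw [hφ.2.2 M hM hd ψ, ← tsum_congr hre, ← Complex.ofReal_tsum, Complex.ofReal_re,
        ENNReal.ofReal_tsum_of_nonneg (fun n => (hφ.1 _ _).1.re_inner_self_nonneg ψ)
          (summable_of_sum_range_le (fun n => (hφ.1 _ _).1.re_inner_self_nonneg ψ)
            (hφ.sum_range_re_inner_self_le hM hd ψ))])

theorem measureReal_apply (hφ : IsPOVM φ) (ψ : H) {M : Set X} (hM : MeasurableSet M) :
    (hφ.measure ψ).real M = (⟪φ M hM ψ, ψ⟫).re := by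
  rw [measureReal_def, measure, Measure.ofMeasurable_apply M hM,
    ENNReal.toReal_ofReal ((hφ.1 M hM).1.re_inner_self_nonneg ψ)]

theorem measureReal_univ (hφ : IsPOVM φ) (ψ : H) : (hφ.measure ψ).real Set.univ = ‖ψ‖ ^ 2 := by
  rw [hφ.measureReal_apply ψ .univ, hφ.2.1, one_apply_eq_self]
  exact inner_self_eq_norm_sq (𝕜 := ℂ) ψ

instance isFiniteMeasure (hφ : IsPOVM φ) (ψ : H) : IsFiniteMeasure (hφ.measure ψ) :=
  ⟨by simp [measure, Measure.ofMeasurable_apply _ MeasurableSet.univ]⟩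

end IsPOVM

section Dyadic

def dyadicFloor (n : ℕ) (a : ℝ) : ℝ := ⌊a * 2 ^ n⌋₊ / 2 ^ n

theorem dyadicFloor_nonneg (n : ℕ) (a : ℝ) : 0 ≤ dyadicFloor n a := by
  unfold dyadicFloor; positivity

theorem dyadicFloor_le {a : ℝ} (ha : 0 ≤ a) (n : ℕ) : dyadicFloor n a ≤ a := by
  rw [dyadicFloor, div_le_iff₀ (by positivity)]
  exact Nat.floor_le (by positivity)

theorem dyadicFloor_mem_Icc {a : ℝ} (ha : a ∈ Set.Icc (0 : ℝ) 1) (n : ℕ) :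
    dyadicFloor n a ∈ Set.Icc (0 : ℝ) 1 :=
  ⟨dyadicFloor_nonneg n a, (dyadicFloor_le ha.1 n).trans ha.2⟩

theorem sub_lt_dyadicFloor (a : ℝ) (n : ℕ) : a - (1 / 2) ^ n < dyadicFloor n a := by
  rw [dyadicFloor, lt_div_iff₀ (by positivity), sub_mul, ← mul_pow, one_div_mul_cancel two_ne_zero,
    one_pow, sub_lt_iff_lt_add]
  exact Nat.lt_floor_add_one _

theorem monotone_dyadicFloor {a : ℝ} (ha : 0 ≤ a) : Monotone fun n => dyadicFloor n a := by
  refine monotone_nat_of_le_succ fun n => ?_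
  have hfloor : 2 * ⌊a * 2 ^ n⌋₊ ≤ ⌊a * 2 ^ (n + 1)⌋₊ := by
    rw [Nat.le_floor_iff (by positivity), pow_succ]
    push_cast
    nlinarith [Nat.floor_le (show 0 ≤ a * 2 ^ n by positivity)]
  calc dyadicFloor n a = (2 * ⌊a * 2 ^ n⌋₊ : ℕ) / 2 ^ (n + 1) := by
        rw [dyadicFloor, pow_succ]; push_cast; field_simp
    _ ≤ dyadicFloor (n + 1) a := by
        rw [dyadicFloor]; gcongr

theorem tendsto_dyadicFloor {a : ℝ} (ha : 0 ≤ a) :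
    Tendsto (fun n => dyadicFloor n a) atTop (𝓝 a) := by
  have hlower : Tendsto (fun n : ℕ => a - (1 / 2 : ℝ) ^ n) atTop (𝓝 a) := by
    simpa using tendsto_const_nhds.sub
      (tendsto_pow_atTop_nhds_zero_of_lt_one (by norm_num : (0 : ℝ) ≤ 1 / 2) (by norm_num))
  exact tendsto_of_tendsto_of_tendsto_of_le_of_le hlower tendsto_const_nhds
    (fun n => (sub_lt_dyadicFloor a n).le) (fun n => dyadicFloor_le ha n)

theorem measurable_dyadicFloor (n : ℕ) : Measurable (dyadicFloor n) :=
  (Measurable.of_discrete.comp (measurable_id.mul_const _).nat_floor).div_const _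

variable {X : Type*}

def dyadicLevel (p : X → ℝ) (n k : ℕ) : Set X := {x | ⌊p x * 2 ^ n⌋₊ = k}

theorem measurableSet_dyadicLevel [MeasurableSpace X] {p : X → ℝ} (hp : Measurable p)
    (n k : ℕ) : MeasurableSet (dyadicLevel p n k) :=
  (hp.mul_const _).nat_floor (measurableSet_singleton k)

theorem dyadicFloor_eq_sum_indicator {p : X → ℝ} {x : X} (hx : p x ≤ 1) (n : ℕ) :
    dyadicFloor n (p x) = ∑ k ∈ Finset.range (2 ^ n + 1),
      (k / 2 ^ n : ℝ) * (dyadicLevel p n k).indicator (fun _ => 1) x := by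
  classical
  have hmem : ⌊p x * 2 ^ n⌋₊ ∈ Finset.range (2 ^ n + 1) := by
    rw [Finset.mem_range, Nat.lt_succ_iff]
    have h2n : (0 : ℝ) ≤ 2 ^ n := by positivity
    exact Nat.floor_le_of_le (by simpa using mul_le_mul_of_nonneg_right hx h2n)
  simp [dyadicLevel, Set.indicator_apply, eq_comm (a := ⌊p x * 2 ^ n⌋₊), hmem, dyadicFloor]

end Dyadic

/-- The integral against `φ` of the simple function `dyadicFloor n ∘ p`. -/
def dyadicOp {X : Type*} [MeasurableSpace X] {H : Type*} [NormedAddCommGroup H]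
    [InnerProductSpace ℂ H] (φ : ∀ M : Set X, MeasurableSet M → (H →L[ℂ] H)) {p : X → ℝ}
    (hp : Measurable p) (n : ℕ) : H →L[ℂ] H :=
  ∑ k ∈ Finset.range (2 ^ n + 1),
    ((k / 2 ^ n : ℝ) : ℂ) • φ (dyadicLevel p n k) (measurableSet_dyadicLevel hp n k)

namespace IsPOVM

variable {X : Type*} [MeasurableSpace X] {H : Type*} [NormedAddCommGroup H]
  [InnerProductSpace ℂ H] {φ : ∀ M : Set X, MeasurableSet M → (H →L[ℂ] H)}
  {p : X → ℝ}

theorem integrable (hφ : IsPOVM φ) (hp : Measurable p) (hp01 : ∀ x, p x ∈ Set.Icc (0 : ℝ) 1)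
    (ψ : H) : Integrable p (hφ.measure ψ) :=
  .of_bound hp.aestronglyMeasurable 1 (ae_of_all _ fun x => by
    rw [Real.norm_of_nonneg (hp01 x).1]; exact (hp01 x).2)

theorem integral_le_norm_sq (hφ : IsPOVM φ) (hp : Measurable p)
    (hp01 : ∀ x, p x ∈ Set.Icc (0 : ℝ) 1) (ψ : H) : ∫ x, p x ∂hφ.measure ψ ≤ ‖ψ‖ ^ 2 := by
  rw [← hφ.measureReal_univ ψ, ← mul_one ((hφ.measure ψ).real _), ← smul_eq_mul,
    ← integral_const]
  exact integral_mono (hφ.integrable hp hp01 ψ) (integrable_const _) fun x => (hp01 x).2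

theorem isEffect_of_inner_self_eq_integral (hφ : IsPOVM φ) (hp : Measurable p)
    (hp01 : ∀ x, p x ∈ Set.Icc (0 : ℝ) 1) {A : H →L[ℂ] H}
    (hA : ∀ ψ, ⟪A ψ, ψ⟫ = ((∫ x, p x ∂hφ.measure ψ : ℝ) : ℂ)) : IsEffect A :=
  isEffect_of_inner_self_eq_ofReal hA (fun _ => integral_nonneg fun x => (hp01 x).1)
    (hφ.integral_le_norm_sq hp hp01)

theorem inner_apply_self (hφ : IsPOVM φ) (ψ : H) {M : Set X} (hM : MeasurableSet M) :
    ⟪φ M hM ψ, ψ⟫ = (((hφ.measure ψ).real M : ℝ) : ℂ) := by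
  rw [hφ.measureReal_apply ψ hM, (hφ.1 M hM).1.ofReal_re_inner_self]

theorem inner_sum_smul_apply_self (hφ : IsPOVM φ) {ι : Type*} (F : Finset ι) (c : ι → ℝ)
    {M : ι → Set X} (hM : ∀ k, MeasurableSet (M k)) (ψ : H) :
    ⟪(∑ k ∈ F, (c k : ℂ) • φ (M k) (hM k)) ψ, ψ⟫
      = ((∫ x, ∑ k ∈ F, c k * (M k).indicator (fun _ => 1) x ∂hφ.measure ψ : ℝ) : ℂ) := by
  rw [integral_finsetSum _ fun k _ => ((integrable_const 1).indicator (hM k)).const_mul _]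
  simp [integral_const_mul, integral_indicator_const _ (hM _), hφ.inner_apply_self]

theorem inner_dyadicOp_self (hφ : IsPOVM φ) (hp : Measurable p) (hp1 : ∀ x, p x ≤ 1)
    (n : ℕ) (ψ : H) :
    ⟪dyadicOp φ hp n ψ, ψ⟫ = ((∫ x, dyadicFloor n (p x) ∂hφ.measure ψ : ℝ) : ℂ) := by
  simp only [dyadicOp, hφ.inner_sum_smul_apply_self, dyadicFloor_eq_sum_indicator (hp1 _)]

theorem tendsto_inner_dyadicOp_self (hφ : IsPOVM φ) (hp : Measurable p)
    (hp01 : ∀ x, p x ∈ Set.Icc (0 : ℝ) 1) (ψ : H) :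
    Tendsto (fun n => ⟪dyadicOp φ hp n ψ, ψ⟫) atTop
      (𝓝 ((∫ x, p x ∂hφ.measure ψ : ℝ) : ℂ)) := by
  simp only [hφ.inner_dyadicOp_self hp (fun x => (hp01 x).2)]
  refine (Complex.continuous_ofReal.tendsto _).comp
    (integral_tendsto_of_tendsto_of_monotone (fun n => hφ.integrable ?_ ?_ ψ)
      (hφ.integrable hp hp01 ψ) (ae_of_all _ fun x => monotone_dyadicFloor (hp01 x).1)
      (ae_of_all _ fun x => tendsto_dyadicFloor (hp01 x).1))
  · exact (measurable_dyadicFloor n).comp hp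
  · exact fun x => dyadicFloor_mem_Icc (hp01 x) n

theorem isEffect_dyadicOp (hφ : IsPOVM φ) (hp : Measurable p)
    (hp01 : ∀ x, p x ∈ Set.Icc (0 : ℝ) 1) (n : ℕ) : IsEffect (dyadicOp φ hp n) :=
  hφ.isEffect_of_inner_self_eq_integral ((measurable_dyadicFloor n).comp hp)
    (fun x => dyadicFloor_mem_Icc (hp01 x) n) (hφ.inner_dyadicOp_self hp (fun x => (hp01 x).2) n)

theorem exists_inner_self_eq_integral [CompleteSpace H] (hφ : IsPOVM φ) (hp : Measurable p)
    (hp01 : ∀ x, p x ∈ Set.Icc (0 : ℝ) 1) :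
    ∃ A : H →L[ℂ] H, ∀ ψ, ⟪A ψ, ψ⟫ = ((∫ x, p x ∂hφ.measure ψ : ℝ) : ℂ) := by
  obtain ⟨A, hA⟩ := exists_wotTendsto_of_tendsto_inner_self
    (fun n => (hφ.isEffect_dyadicOp hp hp01 n).norm_le_one)
    (hφ.tendsto_inner_dyadicOp_self hp hp01)
  exact ⟨A, fun ψ => tendsto_nhds_unique (hA ψ ψ) (hφ.tendsto_inner_dyadicOp_self hp hp01 ψ)⟩

end IsPOVM

section Extension

variable {X : Type*} [MeasurableSpace X] {H : Type*} [NormedAddCommGroup H]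
  [InnerProductSpace ℂ H] {φ : ∀ M : Set X, MeasurableSet M → (H →L[ℂ] H)}

abbrev UnitIntervalFun (X : Type*) [MeasurableSpace X] : Type _ :=
  {p : X → ℝ // Measurable p ∧ ∀ x, p x ∈ Set.Icc (0 : ℝ) 1}

/-- Conditions (i)–(iv) of the theorem. -/
def IsPOVMExtension (φ : ∀ M : Set X, MeasurableSet M → (H →L[ℂ] H))
    (Φ : UnitIntervalFun X → {A : H →L[ℂ] H // IsEffect A}) : Prop :=
  (∀ (M : Set X) (hM : MeasurableSet M)
      (hp : Measurable (M.indicator fun _ => (1 : ℝ)) ∧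
        ∀ x, (M.indicator fun _ => (1 : ℝ)) x ∈ Set.Icc (0 : ℝ) 1),
    (Φ ⟨M.indicator fun _ => (1 : ℝ), hp⟩).1 = φ M hM) ∧
  (∀ (p q : UnitIntervalFun X), (∀ x, p.1 x + q.1 x ≤ 1) →
      ∀ (hpq : Measurable (p.1 + q.1) ∧ ∀ x, (p.1 + q.1) x ∈ Set.Icc (0 : ℝ) 1),
    (Φ ⟨p.1 + q.1, hpq⟩).1 = (Φ p).1 + (Φ q).1) ∧
  (∀ (r : ℝ), r ∈ Set.Icc (0 : ℝ) 1 → ∀ (p : UnitIntervalFun X)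
      (hrp : Measurable (r • p.1) ∧ ∀ x, (r • p.1) x ∈ Set.Icc (0 : ℝ) 1),
    (Φ ⟨r • p.1, hrp⟩).1 = (r : ℂ) • (Φ p).1) ∧
  (∀ (p : ℕ → UnitIntervalFun X) (p' : UnitIntervalFun X),
    (∀ x, Monotone fun n => (p n).1 x) →
    (∀ x, Tendsto (fun n => (p n).1 x) atTop (𝓝 (p'.1 x))) →
    WOTTendsto (fun n => (Φ (p n)).1) (Φ p').1)

theorem isPOVMExtension_of_inner_self_eq_integral (hφ : IsPOVM φ)
    {Φ : UnitIntervalFun X → {A : H →L[ℂ] H // IsEffect A}}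
    (hΦ : ∀ p ψ, ⟪(Φ p).1 ψ, ψ⟫ = ((∫ x, p.1 x ∂hφ.measure ψ : ℝ) : ℂ)) :
    IsPOVMExtension φ Φ := by
  have hint (p : UnitIntervalFun X) ψ := hφ.integrable p.2.1 p.2.2 ψ
  refine ⟨fun M hM hp => ?_, fun p q _ hpq => ?_, fun r _ p hrp => ?_, fun p p' hmono hlim => ?_⟩
  · refine ContinuousLinearMap.ext_inner_self fun ψ => ?_
    rw [hΦ, integral_indicator_const _ hM, smul_eq_mul, mul_one, hφ.inner_apply_self]
  · refine ContinuousLinearMap.ext_inner_self fun ψ => ?_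
    rw [add_apply, inner_add_left, hΦ, hΦ, hΦ, ← Complex.ofReal_add,
      ← integral_add (hint p ψ) (hint q ψ)]
    rfl
  · refine ContinuousLinearMap.ext_inner_self fun ψ => ?_
    rw [smul_apply, inner_smul_left, Complex.conj_ofReal, hΦ, hΦ, ← Complex.ofReal_mul,
      ← integral_const_mul]
    rfl
  · refine wotTendsto_of_tendsto_inner_self fun ψ => ?_
    simp only [hΦ]
    exact (Complex.continuous_ofReal.tendsto _).comp
      (integral_tendsto_of_tendsto_of_monotone (fun n => hint (p n) ψ) (hint p' ψ)
        (ae_of_all _ hmono) (ae_of_all _ hlim))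

namespace IsPOVMExtension

variable {Φ : UnitIntervalFun X → {A : H →L[ℂ] H // IsEffect A}}

theorem apply_eq_smul_of_eq_smul_indicator (hΦ : IsPOVMExtension φ Φ) {r : ℝ}
    (hr : r ∈ Set.Icc (0 : ℝ) 1) {M : Set X} (hM : MeasurableSet M) (p : UnitIntervalFun X)
    (hp : p.1 = r • M.indicator fun _ => 1) : (Φ p).1 = (r : ℂ) • φ M hM := by
  obtain ⟨p, hpm, hp01⟩ := p
  dsimp only at hp
  subst hp
  have hM01 (x : X) : (M.indicator fun _ => (1 : ℝ)) x ∈ Set.Icc (0 : ℝ) 1 := by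
    by_cases hx : x ∈ M <;> simp [hx]
  rw [← hΦ.1 M hM ⟨measurable_const.indicator hM, hM01⟩]
  exact hΦ.2.2.1 r hr ⟨_, measurable_const.indicator hM, hM01⟩ ⟨hpm, hp01⟩

theorem apply_eq_sum_smul (hΦ : IsPOVMExtension φ Φ) {ι : Type*} (F : Finset ι) {c : ι → ℝ}
    (hc : ∀ k ∈ F, c k ∈ Set.Icc (0 : ℝ) 1) {M : ι → Set X} (hM : ∀ k, MeasurableSet (M k))
    (p : UnitIntervalFun X) (hp : ∀ x, p.1 x = ∑ k ∈ F, c k * (M k).indicator (fun _ => 1) x) :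
    (Φ p).1 = ∑ k ∈ F, (c k : ℂ) • φ (M k) (hM k) := by
  classical
  induction F using Finset.induction_on generalizing p with
  | empty =>
    rw [hΦ.apply_eq_smul_of_eq_smul_indicator (Set.left_mem_Icc.mpr zero_le_one) .empty p
      (funext fun x => by simp [hp x])]
    simp
  | insert a F ha ih =>
    simp only [Finset.sum_insert ha] at hp ⊢
    have hrest_nonneg (x : X) : 0 ≤ ∑ k ∈ F, c k * (M k).indicator (fun _ => (1 : ℝ)) x :=
      Finset.sum_nonneg fun k hk => mul_nonneg (hc k (Finset.mem_insert_of_mem hk)).1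
        (Set.indicator_nonneg (fun _ _ => zero_le_one) x)
    have hfirst_nonneg (x : X) : 0 ≤ c a * (M a).indicator (fun _ => (1 : ℝ)) x :=
      mul_nonneg (hc a (Finset.mem_insert_self a F)).1
        (Set.indicator_nonneg (fun _ _ => zero_le_one) x)
    let first : UnitIntervalFun X := ⟨fun x => c a * (M a).indicator (fun _ => 1) x,
      (measurable_const.indicator (hM a)).const_mul _, fun x =>
        ⟨hfirst_nonneg x, by linarith [hp x, (p.2.2 x).2, hrest_nonneg x]⟩⟩
    let rest : UnitIntervalFun X := ⟨fun x => ∑ k ∈ F, c k * (M k).indicator (fun _ => 1) x,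
      Finset.measurable_fun_sum F fun k _ => (measurable_const.indicator (hM k)).const_mul _,
      fun x => ⟨hrest_nonneg x, by linarith [hp x, (p.2.2 x).2, hfirst_nonneg x]⟩⟩
    have hsum (x : X) : first.1 x + rest.1 x = p.1 x := (hp x).symm
    have hsplit : p = ⟨first.1 + rest.1, first.2.1.add rest.2.1,
        fun x => Set.mem_of_eq_of_mem (hsum x) (p.2.2 x)⟩ :=
      Subtype.ext (funext hp)
    rw [hsplit, hΦ.2.1 first rest (fun x => (hsum x).trans_le (p.2.2 x).2),
      ih (fun k hk => hc k (Finset.mem_insert_of_mem hk)) rest fun _ => rfl,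
      hΦ.apply_eq_smul_of_eq_smul_indicator (hc a (Finset.mem_insert_self a F)) (hM a) first rfl]

theorem inner_apply_self (hΦ : IsPOVMExtension φ Φ) (hφ : IsPOVM φ) (p : UnitIntervalFun X)
    (ψ : H) : ⟪(Φ p).1 ψ, ψ⟫ = ((∫ x, p.1 x ∂hφ.measure ψ : ℝ) : ℂ) := by
  let approx (n : ℕ) : UnitIntervalFun X := ⟨fun x => dyadicFloor n (p.1 x),
    (measurable_dyadicFloor n).comp p.2.1, fun x => dyadicFloor_mem_Icc (p.2.2 x) n⟩
  have hcoeff (n k : ℕ) (hk : k ∈ Finset.range (2 ^ n + 1)) :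
      (k / 2 ^ n : ℝ) ∈ Set.Icc (0 : ℝ) 1 := by
    refine ⟨by positivity, div_le_one_of_le₀ ?_ (by positivity)⟩
    exact_mod_cast Nat.lt_succ_iff.mp (Finset.mem_range.mp hk)
  have happrox (n : ℕ) : (Φ (approx n)).1 = dyadicOp φ p.2.1 n :=
    hΦ.apply_eq_sum_smul _ (hcoeff n) _ (approx n)
      fun x => dyadicFloor_eq_sum_indicator (p.2.2 x).2 n
  have hweak := hΦ.2.2.2 approx p (fun x => monotone_dyadicFloor (p.2.2 x).1)
    (fun x => tendsto_dyadicFloor (p.2.2 x).1) ψ ψ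
  simp only [happrox] at hweak
  exact tendsto_nhds_unique hweak (hφ.tendsto_inner_dyadicOp_self p.2.1 p.2.2 ψ)

end IsPOVMExtension

end Extension

theorem stmt5 {X : Type u} [MeasurableSpace X] {H : Type v}
    [NormedAddCommGroup H] [InnerProductSpace ℂ H] [CompleteSpace H]
    (φ : ∀ M : Set X, MeasurableSet M → (H →L[ℂ] H)) (hφ : IsPOVM φ) :
    ∃! Φ : {p : X → ℝ // Measurable p ∧ ∀ x, p x ∈ Set.Icc (0 : ℝ) 1} →
        {A : H →L[ℂ] H // IsEffect A},
      (∀ (M : Set X) (hM : MeasurableSet M)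
          (hp : Measurable (M.indicator fun _ => (1 : ℝ)) ∧
            ∀ x, (M.indicator fun _ => (1 : ℝ)) x ∈ Set.Icc (0 : ℝ) 1),
        (Φ ⟨M.indicator fun _ => (1 : ℝ), hp⟩).1 = φ M hM) ∧
      (∀ (p q : {p : X → ℝ // Measurable p ∧ ∀ x, p x ∈ Set.Icc (0 : ℝ) 1})
          (hle : ∀ x, p.1 x + q.1 x ≤ 1)
          (hpq : Measurable (p.1 + q.1) ∧ ∀ x, (p.1 + q.1) x ∈ Set.Icc (0 : ℝ) 1),
        (Φ ⟨p.1 + q.1, hpq⟩).1 = (Φ p).1 + (Φ q).1) ∧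
      (∀ (r : ℝ) (hr : r ∈ Set.Icc (0 : ℝ) 1)
          (p : {p : X → ℝ // Measurable p ∧ ∀ x, p x ∈ Set.Icc (0 : ℝ) 1})
          (hrp : Measurable (r • p.1) ∧ ∀ x, (r • p.1) x ∈ Set.Icc (0 : ℝ) 1),
        (Φ ⟨r • p.1, hrp⟩).1 = (r : ℂ) • (Φ p).1) ∧
      (∀ (p : ℕ → {p : X → ℝ // Measurable p ∧ ∀ x, p x ∈ Set.Icc (0 : ℝ) 1})
          (p' : {p : X → ℝ // Measurable p ∧ ∀ x, p x ∈ Set.Icc (0 : ℝ) 1}),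
        (∀ x, Monotone fun n => (p n).1 x) →
        (∀ x, Tendsto (fun n => (p n).1 x) atTop (𝓝 (p'.1 x))) →
        WOTTendsto (fun n => (Φ (p n)).1) (Φ p').1) := by
  show ∃! Φ, IsPOVMExtension φ Φ
  choose A hA using fun p : UnitIntervalFun X => hφ.exists_inner_self_eq_integral p.2.1 p.2.2
  refine ⟨fun p => ⟨A p, hφ.isEffect_of_inner_self_eq_integral p.2.1 p.2.2 (hA p)⟩,
    isPOVMExtension_of_inner_self_eq_integral hφ hA, fun Ψ hΨ => funext fun p => ?_⟩
  exact Subtype.ext <| ContinuousLinearMap.ext_inner_self fun ψ =>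
    (hΨ.inner_apply_self hφ p ψ).trans (hA p ψ).symm

end
end

section
/- Let X be a measurable space, H a complex Hilbert space, and φ a POVM on X with values in effects on H such that every value is a projection: φ(M)∘φ(M) = φ(M) for all measurable M. Then φ is multiplicative on intersections: φ(M ∩ N) = φ(M) ∘ φ(N) for all measurable subsets M, N of X. -/
/-!
Countable additivity applied to sequences that are eventually empty makes `φ` finitely additive.
If `P`, `Q` and `P + Q` are idempotents then `PQ + QP = 0`, which forces `PQ = 0`; hence the
projections of disjoint sets annihilate each other. Expanding
`φ M * φ N = (φ (M ∩ N) + φ (M \ N)) * (φ (M ∩ N) + φ (N \ M))`, only `φ (M ∩ N) ^ 2 = φ (M ∩ N)`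
survives.
-/

open scoped ComplexInnerProductSpace ComplexOrder

universe u v

noncomputable section

theorem ContinuousLinearMap.ext_inner_map_self {H : Type*} [NormedAddCommGroup H]
    [InnerProductSpace ℂ H] {S T : H →L[ℂ] H} (h : ∀ x : H, ⟪S x, x⟫ = ⟪T x, x⟫) : S = T :=
  ContinuousLinearMap.coe_injective ((ext_inner_map _ _).1 h)

namespace IsPOVM

variable {X : Type*} [MeasurableSpace X] {H : Type*} [NormedAddCommGroup H]
  [InnerProductSpace ℂ H] {φ : ∀ M : Set X, MeasurableSet M → (H →L[ℂ] H)}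

theorem apply_empty (hφ : IsPOVM φ) : φ ∅ .empty = 0 := by
  refine ContinuousLinearMap.ext_inner_map_self fun ψ ↦ ?_
  -- `∑' _ : ℕ, c = Nat.card ℕ • c = 0` whether or not `c = 0`.
  have h := hφ.2.2 (fun _ ↦ ∅) (fun _ ↦ .empty) (fun _ _ _ ↦ Set.disjoint_empty _) ψ
  simpa [tsum_const] using h

theorem apply_union (hφ : IsPOVM φ) {M N : Set X} (hM : MeasurableSet M)
    (hN : MeasurableSet N) (hMN : Disjoint M N) :
    φ (M ∪ N) (hM.union hN) = φ M hM + φ N hN := by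
  let s : ℕ → Set X := fun | 0 => M | 1 => N | _ => ∅
  have hs : ∀ n, MeasurableSet (s n) := by
    rintro (_ | _ | n)
    exacts [hM, hN, .empty]
  have hs_disj : Pairwise (Function.onFun Disjoint s) := by
    rintro (_ | _ | i) (_ | _ | j) hij <;> simp_all [s, Function.onFun, hMN.symm]
  have hs_union : (⋃ n, s n) = M ∪ N := by
    ext x
    refine ⟨?_, ?_⟩
    · rintro ⟨_, ⟨(_ | _ | n), rfl⟩, hx⟩ <;> simp_all [s]
    · rintro (hx | hx)
      exacts [Set.mem_iUnion.2 ⟨0, hx⟩, Set.mem_iUnion.2 ⟨1, hx⟩]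
  refine ContinuousLinearMap.ext_inner_map_self fun ψ ↦ ?_
  have h := hφ.2.2 s hs hs_disj ψ
  rw [tsum_eq_sum (s := {0, 1}), Finset.sum_pair zero_ne_one] at h
  · simp only [hs_union] at h
    rwa [add_apply, inner_add_left]
  · rintro (_ | _ | n) hn
    · simp at hn
    · simp at hn
    · simp [s, hφ.apply_empty]

theorem mul_eq_zero_of_disjoint (hφ : IsPOVM φ) (hproj : ∀ M hM, IsIdempotentElem (φ M hM))
    {M N : Set X} (hM : MeasurableSet M) (hN : MeasurableSet N) (hMN : Disjoint M N) :
    φ M hM * φ N hN = 0 := by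
  have : IsAddTorsionFree (H →L[ℂ] H) := .of_isTorsionFree ℂ _
  have hunion := hproj _ (hM.union hN)
  rw [hφ.apply_union hM hN hMN] at hunion
  exact (hproj M hM).mul_eq_zero_of_anticommute (((hproj M hM).add_iff (hproj N hN)).1 hunion)

theorem apply_inter (hφ : IsPOVM φ) (hproj : ∀ M hM, IsIdempotentElem (φ M hM))
    {M N : Set X} (hM : MeasurableSet M) (hN : MeasurableSet N) :
    φ (M ∩ N) (hM.inter hN) = φ M hM * φ N hN := by
  have hinter_sdiff : Disjoint (M ∩ N) (N \ M) :=
    Set.disjoint_sdiff_right.mono_left Set.inter_subset_left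
  have hsdiff_inter : Disjoint (M \ N) (M ∩ N) :=
    Set.disjoint_sdiff_left.mono_right Set.inter_subset_right
  have hsdiff_sdiff : Disjoint (M \ N) (N \ M) := disjoint_sdiff_sdiff
  have hM_split : φ M hM = φ (M ∩ N) (hM.inter hN) + φ (M \ N) (hM.diff hN) := by
    rw [← hφ.apply_union _ _ hsdiff_inter.symm]
    simp only [Set.inter_union_sdiff]
  have hN_split : φ N hN = φ (M ∩ N) (hM.inter hN) + φ (N \ M) (hN.diff hM) := by
    rw [← hφ.apply_union _ _ hinter_sdiff]
    simp only [Set.inter_comm M N, Set.inter_union_sdiff]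
  rw [hM_split, hN_split, add_mul, mul_add, mul_add, (hproj _ _).eq,
    hφ.mul_eq_zero_of_disjoint hproj _ _ hinter_sdiff,
    hφ.mul_eq_zero_of_disjoint hproj _ _ hsdiff_inter,
    hφ.mul_eq_zero_of_disjoint hproj _ _ hsdiff_sdiff]
  simp

end IsPOVM

theorem stmt9_general {X : Type u} [MeasurableSpace X] {H : Type v}
    [NormedAddCommGroup H] [InnerProductSpace ℂ H]
    (φ : ∀ M : Set X, MeasurableSet M → (H →L[ℂ] H)) (hφ : IsPOVM φ)
    (hproj : ∀ (M : Set X) (hM : MeasurableSet M), (φ M hM) ∘L (φ M hM) = φ M hM) :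
    ∀ (M N : Set X) (hM : MeasurableSet M) (hN : MeasurableSet N),
      φ (M ∩ N) (hM.inter hN) = (φ M hM) ∘L (φ N hN) :=
  fun _ _ hM hN ↦ hφ.apply_inter hproj hM hN

theorem stmt9 {X : Type u} [MeasurableSpace X] {H : Type v}
    [NormedAddCommGroup H] [InnerProductSpace ℂ H] [CompleteSpace H]
    (φ : ∀ M : Set X, MeasurableSet M → (H →L[ℂ] H)) (hφ : IsPOVM φ)
    (hproj : ∀ (M : Set X) (hM : MeasurableSet M), (φ M hM) ∘L (φ M hM) = φ M hM) :
    ∀ (M N : Set X) (hM : MeasurableSet M) (hN : MeasurableSet N),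
      φ (M ∩ N) (hM.inter hN) = (φ M hM) ∘L (φ N hN) :=
  stmt9_general φ hφ hproj

end
end

section
/- Let (X, μ) be a finite measure space, H a complex Hilbert space, and A a POVM on X with values in effects on H that admits a Radon–Nikodym derivative with respect to μ: a strongly measurable function d : X → B(H) with each d(x) positive and ∫_M d dμ = A(M) (Bochner integral) for every measurable M. Let (Y x) be a family of measurable spaces indexed by x ∈ X with a POVM B_x on Y x with values in effects on H for each x, and endow the sigma type Σ x, Y x with its canonical σ-algebra. Assume that for every measurable subset S of Σ x, Y x the function x ↦ √(d x) ∘ B_x(S_x) ∘ √(d x) is Bochner integrable with respect to μ, where S_x = {y | ⟨x, y⟩ ∈ S} and √(d x) is the positive square root of d x. Then the map (A;B) defined on measurable S ⊆ Σ x, Y x by (A;B)(S) = ∫ (√(d x) ∘ B_x(S_x) ∘ √(d x)) dμ(x) is a POVM on Σ x, Y x with values in effects on H: each value is an effect, (A;B)(univ) = id, and (A;B) is countably additive in the weak operator topology on pairwise disjoint measurable sets. -/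
open MeasureTheory Filter Topology
open scoped ComplexInnerProductSpace ComplexOrder

universe u v w

noncomputable section

/-- The inclusion `Y x → Σ x, Y x` is measurable for the canonical σ-algebra on the
sigma type. -/
lemma measurable_sigmaMk {X : Type u} {Y : X → Type v} [∀ x, MeasurableSpace (Y x)]
    (x : X) : Measurable (@Sigma.mk X Y x) :=
  Measurable.of_le_map (iInf_le _ x)

/-- Slices of measurable subsets of a sigma type are measurable. -/
lemma measurableSet_slice {X : Type u} {Y : X → Type v} [∀ x, MeasurableSpace (Y x)]
    {S : Set (Σ x, Y x)} (hS : MeasurableSet S) (x : X) :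
    MeasurableSet (Sigma.mk x ⁻¹' S) :=
  measurable_sigmaMk x hS

/-! The quadratic form of `(A;B)(S)` at `ψ` is `∫ ⟪B_x(S_x) (√(d x) ψ), √(d x) ψ⟫ dμ`, so everything
reduces to the POVMs `B_x` evaluated at the vectors `√(d x) ψ`. Conjugation by the self-adjoint
`√(d x)` preserves the Loewner order, so `0 ≤ B_x(S_x) ≤ 1` integrates to
`0 ≤ (A;B)(S) ≤ ∫ d dμ = A(X) = 1`. For countable additivity, the pointwise series
`∑ₙ ⟪B_x((Mₙ)_x) v, v⟫` have nonnegative terms, so they are dominated by the integrable quadratic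
form of the union, and dominated convergence exchanges sum and integral. -/

section Effects

variable {H : Type*} [NormedAddCommGroup H] [InnerProductSpace ℂ H]

lemma isPositiveOp_iff_nonneg (A : H →L[ℂ] H) : IsPositiveOp A ↔ 0 ≤ A := by
  rw [ContinuousLinearMap.nonneg_iff_isPositive, ContinuousLinearMap.isPositive_iff_complex]
  refine forall_congr' fun ψ => ?_
  simp [Complex.nonneg_iff, Complex.ext_iff, eq_comm, and_comm]

lemma isEffect_iff (A : H →L[ℂ] H) : IsEffect A ↔ 0 ≤ A ∧ A ≤ 1 := by
  rw [IsEffect, isPositiveOp_iff_nonneg, isPositiveOp_iff_nonneg, ContinuousLinearMap.le_def A 1,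
    ContinuousLinearMap.nonneg_iff_isPositive (1 - A)]

lemma inner_conj_apply_self [CompleteSpace H] {t : H →L[ℂ] H} (ht : IsSelfAdjoint t)
    (E : H →L[ℂ] H) (ψ : H) : ⟪(t ∘L E ∘L t) ψ, ψ⟫ = ⟪E (t ψ), t ψ⟫ :=
  ht.isSymmetric _ _

end Effects

namespace IsPOVM

variable {H : Type*} [NormedAddCommGroup H] [InnerProductSpace ℂ H]
  {Z : Type*} [MeasurableSpace Z] {φ : ∀ M : Set Z, MeasurableSet M → (H →L[ℂ] H)}

lemma inner_nonneg (hφ : IsPOVM φ) {M : Set Z} (hM : MeasurableSet M) (ψ : H) :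
    0 ≤ ⟪φ M hM ψ, ψ⟫ :=
  (hφ.1 M hM).1 ψ

lemma inner_le_inner_self (hφ : IsPOVM φ) {M : Set Z} (hM : MeasurableSet M) (ψ : H) :
    ⟪φ M hM ψ, ψ⟫ ≤ ⟪ψ, ψ⟫ := by
  simpa [inner_sub_left] using (hφ.1 M hM).2 ψ

lemma inner_eq_tsum (hφ : IsPOVM φ) {M : ℕ → Set Z} (hM : ∀ n, MeasurableSet (M n))
    (hd : Pairwise (Function.onFun Disjoint M)) {N : Set Z} (hN : MeasurableSet N)
    (hMN : ⋃ n, M n = N) (ψ : H) :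
    ⟪φ N hN ψ, ψ⟫ = ∑' n, ⟪φ (M n) (hM n) ψ, ψ⟫ := by
  subst hMN
  exact hφ.2.2 M hM hd ψ

lemma inner_eq_zero_of_eq_empty (hφ : IsPOVM φ) {N : Set Z} (hN : MeasurableSet N)
    (hN₀ : N = ∅) (ψ : H) : ⟪φ N hN ψ, ψ⟫ = 0 := by
  have h := hφ.inner_eq_tsum (fun _ => MeasurableSet.empty) (fun _ _ _ => disjoint_bot_left) hN
    (by rw [hN₀, Set.iUnion_empty]) ψ
  simp only [← hN₀] at h
  by_cases hc : Summable fun _ : ℕ => ⟪φ N hN ψ, ψ⟫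
  · exact tendsto_nhds_unique tendsto_const_nhds hc.tendsto_atTop_zero
  · rwa [tsum_eq_zero_of_not_summable hc] at h

lemma sum_inner_le_inner_self (hφ : IsPOVM φ) {M : ℕ → Set Z} (hM : ∀ n, MeasurableSet (M n))
    (hd : Pairwise (Function.onFun Disjoint M)) (F : Finset ℕ) (ψ : H) :
    ∑ n ∈ F, ⟪φ (M n) (hM n) ψ, ψ⟫ ≤ ⟪ψ, ψ⟫ := by
  classical
  set M' : ℕ → Set Z := fun n => if n ∈ F then M n else ∅
  have hM' : ∀ n, MeasurableSet (M' n) := fun n => by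
    by_cases hn : n ∈ F <;> simp [M', hn, hM n]
  have hd' : Pairwise (Function.onFun Disjoint M') := fun i j hij => by
    by_cases hi : i ∈ F <;> by_cases hj : j ∈ F <;> simp [Function.onFun, M', hi, hj, hd hij]
  have hterm : ∀ n, ⟪φ (M' n) (hM' n) ψ, ψ⟫ = if n ∈ F then ⟪φ (M n) (hM n) ψ, ψ⟫ else 0 := by
    intro n
    by_cases hn : n ∈ F
    · simp [M', hn]
    · simpa [hn] using hφ.inner_eq_zero_of_eq_empty (hM' n) (by simp [M', hn]) ψ
  calc ∑ n ∈ F, ⟪φ (M n) (hM n) ψ, ψ⟫ = ∑' n, ⟪φ (M' n) (hM' n) ψ, ψ⟫ := by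
        rw [tsum_eq_sum (s := F) fun n hn => by rw [hterm, if_neg hn]]
        exact Finset.sum_congr rfl fun n hn => by rw [hterm, if_pos hn]
    _ = ⟪φ (⋃ n, M' n) (MeasurableSet.iUnion hM') ψ, ψ⟫ := (hφ.2.2 M' hM' hd' ψ).symm
    _ ≤ ⟪ψ, ψ⟫ := hφ.inner_le_inner_self _ ψ

lemma hasSum_inner (hφ : IsPOVM φ) {M : ℕ → Set Z} (hM : ∀ n, MeasurableSet (M n))
    (hd : Pairwise (Function.onFun Disjoint M)) {N : Set Z} (hN : MeasurableSet N)
    (hMN : ⋃ n, M n = N) (ψ : H) :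
    HasSum (fun n => ⟪φ (M n) (hM n) ψ, ψ⟫) ⟪φ N hN ψ, ψ⟫ := by
  have hnorm : ∀ n, (‖⟪φ (M n) (hM n) ψ, ψ⟫‖ : ℂ) = ⟪φ (M n) (hM n) ψ, ψ⟫ := fun n =>
    Complex.norm_of_nonneg' (hφ.inner_nonneg (hM n) ψ)
  have hbound : ∀ F : Finset ℕ, ∑ n ∈ F, ‖⟪φ (M n) (hM n) ψ, ψ⟫‖ ≤ ‖ψ‖ ^ 2 := fun F => by
    rw [← Complex.real_le_real]
    push_cast
    rw [Finset.sum_congr rfl fun n _ => hnorm n]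
    simpa [inner_self_eq_norm_sq_to_K] using hφ.sum_inner_le_inner_self hM hd F ψ
  have hsum := (summable_of_sum_le (fun _ => norm_nonneg _) hbound).of_norm
  exact hφ.inner_eq_tsum hM hd hN hMN ψ ▸ hsum.hasSum

end IsPOVM

section Integrals

variable {X : Type*} [MeasurableSpace X] {μ : Measure X}

lemma hasSum_integral_of_nonneg {ι : Type*} [Countable ι] {F : ι → X → ℂ} {G : X → ℂ}
    (hF : ∀ n x, 0 ≤ F n x) (hF_meas : ∀ n, AEStronglyMeasurable (F n) μ) (hG : Integrable G μ)
    (hFG : ∀ x, HasSum (fun n => F n x) (G x)) :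
    HasSum (fun n => ∫ x, F n x ∂μ) (∫ x, G x ∂μ) := by
  have hnorm : ∀ x, HasSum (fun n => (‖F n x‖ : ℂ)) (‖G x‖ : ℂ) := fun x => by
    rw [Complex.norm_of_nonneg' ((hFG x).nonneg fun n => hF n x)]
    convert hFG x using 2 with n
    exact Complex.norm_of_nonneg' (hF n x)
  refine hasSum_integral_of_dominated_convergence (fun n x => ‖F n x‖) hF_meas
    (fun n => ae_of_all _ fun x => le_rfl)
    (ae_of_all _ fun x => Complex.summable_ofReal.mp (hnorm x).summable)
    (hG.norm.congr (ae_of_all _ fun x => Complex.ofReal_injective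
      ((hnorm x).tsum_eq.symm.trans (Complex.ofReal_tsum _).symm))) (ae_of_all _ hFG)

variable {H : Type*} [NormedAddCommGroup H] [InnerProductSpace ℂ H] [CompleteSpace H]

lemma inner_integral_apply_self {T : X → H →L[ℂ] H} (hT : Integrable T μ) (ψ : H) :
    ⟪(∫ x, T x ∂μ) ψ, ψ⟫ = ∫ x, ⟪T x ψ, ψ⟫ ∂μ := by
  rw [ContinuousLinearMap.integral_apply hT, ← inner_conj_symm,
    ← integral_inner (hT.apply_continuousLinearMap ψ), ← integral_conj]
  simp_rw [inner_conj_symm]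

end Integrals

section Sequential

variable {X : Type*} {H : Type*} [NormedAddCommGroup H] [InnerProductSpace ℂ H]
  {s : X → H →L[ℂ] H} {Y : X → Type*} [∀ x, MeasurableSpace (Y x)]
  {B : ∀ x, ∀ N : Set (Y x), MeasurableSet N → (H →L[ℂ] H)}

lemma conj_slice_univ (hB : ∀ x, IsPOVM (B x)) (x : X) :
    s x ∘L (B x (Sigma.mk x ⁻¹' Set.univ) (measurableSet_slice MeasurableSet.univ x) ∘L s x) =
      s x ∘L s x := by
  rw [show B x (Sigma.mk x ⁻¹' Set.univ) _ = 1 from (hB x).2.1]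
  rfl

lemma conj_slice_mem_Icc [CompleteSpace H] (hs : ∀ x, IsSelfAdjoint (s x)) (hB : ∀ x, IsPOVM (B x))
    {S : Set (Σ x, Y x)} (hS : MeasurableSet S) (x : X) :
    s x ∘L (B x (Sigma.mk x ⁻¹' S) (measurableSet_slice hS x) ∘L s x) ∈
      Set.Icc 0 (s x ∘L s x) := by
  obtain ⟨h₀, h₁⟩ := (isEffect_iff _).mp ((hB x).1 _ (measurableSet_slice hS x))
  simp only [← ContinuousLinearMap.mul_def, ← mul_assoc]
  refine ⟨(hs x).conjugate_nonneg h₀, ?_⟩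
  simpa using (hs x).conjugate_le_conjugate h₁

variable [MeasurableSpace X] {μ : Measure X}

/-- The map `(A;B)` of the statement, with `s x = √(d x)`. -/
def sequentialPOVM (μ : Measure X) (s : X → H →L[ℂ] H)
    (B : ∀ x, ∀ N : Set (Y x), MeasurableSet N → (H →L[ℂ] H))
    (S : Set (Σ x, Y x)) (hS : MeasurableSet S) : H →L[ℂ] H :=
  ∫ x, s x ∘L (B x (Sigma.mk x ⁻¹' S) (measurableSet_slice hS x) ∘L s x) ∂μ

lemma sequentialPOVM_univ (hB : ∀ x, IsPOVM (B x)) (hone : ∫ x, s x ∘L s x ∂μ = 1) :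
    sequentialPOVM μ s B Set.univ MeasurableSet.univ = 1 := by
  simp only [sequentialPOVM, conj_slice_univ hB, hone]

variable [CompleteSpace H]

lemma sequentialPOVM_isEffect (hs : ∀ x, IsSelfAdjoint (s x)) (hB : ∀ x, IsPOVM (B x))
    (hone : ∫ x, s x ∘L s x ∂μ = 1)
    (hint : ∀ (S : Set (Σ x, Y x)) (hS : MeasurableSet S),
      Integrable (fun x => s x ∘L (B x (Sigma.mk x ⁻¹' S) (measurableSet_slice hS x) ∘L s x)) μ)
    {S : Set (Σ x, Y x)} (hS : MeasurableSet S) :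
    IsEffect (sequentialPOVM μ s B S hS) := by
  have hsq : Integrable (fun x => s x ∘L s x) μ := by
    simpa only [conj_slice_univ hB] using hint _ MeasurableSet.univ
  rw [isEffect_iff, ← hone]
  exact ⟨integral_nonneg fun x => (conj_slice_mem_Icc hs hB hS x).1,
    integral_mono (hint S hS) hsq fun x => (conj_slice_mem_Icc hs hB hS x).2⟩

lemma integrable_inner_slice_apply (hs : ∀ x, IsSelfAdjoint (s x))
    {S : Set (Σ x, Y x)} (hS : MeasurableSet S)
    (hint : Integrable
      (fun x => s x ∘L (B x (Sigma.mk x ⁻¹' S) (measurableSet_slice hS x) ∘L s x)) μ) (ψ : H) :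
    Integrable (fun x => ⟪B x (Sigma.mk x ⁻¹' S) (measurableSet_slice hS x) (s x ψ), s x ψ⟫) μ := by
  simpa only [inner_conj_apply_self (hs _)] using
    (hint.apply_continuousLinearMap ψ).inner_const (𝕜 := ℂ) ψ

lemma inner_sequentialPOVM_apply_self (hs : ∀ x, IsSelfAdjoint (s x))
    {S : Set (Σ x, Y x)} (hS : MeasurableSet S)
    (hint : Integrable
      (fun x => s x ∘L (B x (Sigma.mk x ⁻¹' S) (measurableSet_slice hS x) ∘L s x)) μ) (ψ : H) :
    ⟪sequentialPOVM μ s B S hS ψ, ψ⟫ =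
      ∫ x, ⟪B x (Sigma.mk x ⁻¹' S) (measurableSet_slice hS x) (s x ψ), s x ψ⟫ ∂μ := by
  simp only [sequentialPOVM, inner_integral_apply_self hint, inner_conj_apply_self (hs _)]

lemma sequentialPOVM_iUnion (hs : ∀ x, IsSelfAdjoint (s x)) (hB : ∀ x, IsPOVM (B x))
    (hint : ∀ (S : Set (Σ x, Y x)) (hS : MeasurableSet S),
      Integrable (fun x => s x ∘L (B x (Sigma.mk x ⁻¹' S) (measurableSet_slice hS x) ∘L s x)) μ)
    {M : ℕ → Set (Σ x, Y x)} (hM : ∀ n, MeasurableSet (M n))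
    (hd : Pairwise (Function.onFun Disjoint M)) (ψ : H) :
    ⟪sequentialPOVM μ s B (⋃ n, M n) (MeasurableSet.iUnion hM) ψ, ψ⟫ =
      ∑' n, ⟪sequentialPOVM μ s B (M n) (hM n) ψ, ψ⟫ := by
  have hint_inner := fun S hS => integrable_inner_slice_apply hs hS (hint S hS) ψ
  have hform := fun S hS => inner_sequentialPOVM_apply_self hs hS (hint S hS) ψ
  simp only [hform]
  refine (hasSum_integral_of_nonneg (fun n x => (hB x).inner_nonneg _ _)
    (fun n => (hint_inner _ (hM n)).aestronglyMeasurable) (hint_inner _ (MeasurableSet.iUnion hM))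
    fun x => ?_).tsum_eq.symm
  exact (hB x).hasSum_inner _ (fun i j hij => (hd hij).preimage _) _ Set.preimage_iUnion.symm _

theorem isPOVM_sequentialPOVM (hs : ∀ x, IsSelfAdjoint (s x)) (hB : ∀ x, IsPOVM (B x))
    (hone : ∫ x, s x ∘L s x ∂μ = 1)
    (hint : ∀ (S : Set (Σ x, Y x)) (hS : MeasurableSet S),
      Integrable (fun x => s x ∘L (B x (Sigma.mk x ⁻¹' S) (measurableSet_slice hS x) ∘L s x)) μ) :
    IsPOVM (sequentialPOVM μ s B) :=
  ⟨fun _ hS => sequentialPOVM_isEffect hs hB hone hint hS, sequentialPOVM_univ hB hone,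
    fun _ hM hd ψ => sequentialPOVM_iUnion hs hB hint hM hd ψ⟩

end Sequential

theorem stmt10_general {X : Type u} [MeasurableSpace X] (μ : Measure X)
    {H : Type w} [NormedAddCommGroup H] [InnerProductSpace ℂ H] [CompleteSpace H]
    (A : ∀ M : Set X, MeasurableSet M → (H →L[ℂ] H)) (hA : IsPOVM A)
    -- the Radon–Nikodym derivative `d` of `A` with respect to `μ`
    (d : X → (H →L[ℂ] H))
    (hd_der : ∀ (M : Set X) (hM : MeasurableSet M), ∫ x in M, d x ∂μ = A M hM)
    -- the positive square root `s x` of `d x`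
    (s : X → (H →L[ℂ] H)) (hs_pos : ∀ x, IsPositiveOp (s x))
    (hs_sq : ∀ x, s x ∘L s x = d x)
    -- the family of POVMs `B x` on the measurable spaces `Y x`
    (Y : X → Type v) [∀ x, MeasurableSpace (Y x)]
    (B : ∀ x, ∀ N : Set (Y x), MeasurableSet N → (H →L[ℂ] H))
    (hB : ∀ x, IsPOVM (B x))
    -- integrability of the integrands
    (hint : ∀ (S : Set (Σ x, Y x)) (hS : MeasurableSet S),
      Integrable (fun x =>
        s x ∘L (B x (Sigma.mk x ⁻¹' S) (measurableSet_slice hS x) ∘L s x)) μ) :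
    IsPOVM (fun (S : Set (Σ x, Y x)) (hS : MeasurableSet S) =>
      ∫ x, s x ∘L (B x (Sigma.mk x ⁻¹' S) (measurableSet_slice hS x) ∘L s x) ∂μ) := by
  have hs : ∀ x, IsSelfAdjoint (s x) := fun x =>
    IsSelfAdjoint.of_nonneg ((isPositiveOp_iff_nonneg _).mp (hs_pos x))
  have hone : ∫ x, s x ∘L s x ∂μ = 1 := by
    rw [← hA.2.1, ← hd_der, Measure.restrict_univ]
    simp only [hs_sq]
  exact isPOVM_sequentialPOVM hs hB hone hint

theorem stmt10 {X : Type u} [MeasurableSpace X] (μ : Measure X) [IsFiniteMeasure μ]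
    {H : Type w} [NormedAddCommGroup H] [InnerProductSpace ℂ H] [CompleteSpace H]
    (A : ∀ M : Set X, MeasurableSet M → (H →L[ℂ] H)) (hA : IsPOVM A)
    -- the Radon–Nikodym derivative `d` of `A` with respect to `μ`
    (d : X → (H →L[ℂ] H)) (hd_meas : StronglyMeasurable d)
    (hd_pos : ∀ x, IsPositiveOp (d x))
    (hd_der : ∀ (M : Set X) (hM : MeasurableSet M), ∫ x in M, d x ∂μ = A M hM)
    -- the positive square root `s x` of `d x`
    (s : X → (H →L[ℂ] H)) (hs_pos : ∀ x, IsPositiveOp (s x))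
    (hs_sq : ∀ x, s x ∘L s x = d x)
    -- the family of POVMs `B x` on the measurable spaces `Y x`
    (Y : X → Type v) [∀ x, MeasurableSpace (Y x)]
    (B : ∀ x, ∀ N : Set (Y x), MeasurableSet N → (H →L[ℂ] H))
    (hB : ∀ x, IsPOVM (B x))
    -- integrability of the integrands
    (hint : ∀ (S : Set (Σ x, Y x)) (hS : MeasurableSet S),
      Integrable (fun x =>
        s x ∘L (B x (Sigma.mk x ⁻¹' S) (measurableSet_slice hS x) ∘L s x)) μ) :
    IsPOVM (fun (S : Set (Σ x, Y x)) (hS : MeasurableSet S) =>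
      ∫ x, s x ∘L (B x (Sigma.mk x ⁻¹' S) (measurableSet_slice hS x) ∘L s x) ∂μ) :=
  stmt10_general μ A hA d hd_der s hs_pos hs_sq Y B hB hint

end
end
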